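/- Let N be a finite nonempty player set and for each nonempty S ⊆ N let a_S < b_S be reals; set μ_S = (a_S + b_S)/2. Let a be the lower bound game (value a_S on each nonempty S, 0 on ∅) and μ the mean game (value μ_S on each nonempty S, 0 on ∅). If the game a is convex and the core C(μ) is nonempty, then there exist d, r : N → ℝ with r_i ≥ 0 for all i, d(N) = μ_N, r(N) = 1, such that for every nonempty S ⊆ N the pushforward of Unif[a_N, b_N] under the map z ↦ d(S) + r(S)·(z − μ_N) second-order stochastically dominates Unif[a_S, b_S]. -/

import Mathlib

/-!
Take `x` in the core of the mean game. Since `a_S < μ_S`, `x` is feasible for the convex lower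
bound game; lowering one coordinate at a time until its player lies in a tight coalition, and
using that tight coalitions of a convex game are closed under union, gives `y ∈ C(a)` with
`y ≤ x`. With `d = x` and `r = (x - y) / ((b_N - a_N) / 2)`, coalition `S` receives
`Unif[y(S), 2 x(S) - y(S)]` (a point mass at `x(S)` if `r(S) = 0`), whose lower end is at least
`a_S` and whose mean is at least `μ_S`. Two uniform cdfs with ordered lower ends cross at most once,
so ordered means already give second-order dominance.
-/

open MeasureTheory ProbabilityTheory
open scoped NNReal ENNReal

/-- `P` second-order stochastically dominates `Q`. -/
def SSD (P Q : Measure ℝ) : Prop :=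
  ∀ u : ℝ, (∫ z in Set.Iic u, (cdf P z - cdf Q z)) ≤ 0

/-- The uniform probability measure on the interval `[a, b]`. -/
noncomputable def unif (a b : ℝ) : Measure ℝ :=
  (ENNReal.ofReal (b - a))⁻¹ • (volume.restrict (Set.Icc a b))

/-- The core of a TU-game `v` on the finite player set `N`. -/
def core {N : Type*} [Fintype N] (v : Finset N → ℝ) : Set (N → ℝ) :=
  {x | (∀ S : Finset N, v S ≤ ∑ i ∈ S, x i) ∧ ∑ i : N, x i = v Finset.univ}

/-- A TU-game `v` is convex. -/
def IsConvexGame {N : Type*} [Fintype N] [DecidableEq N] (v : Finset N → ℝ) : Prop :=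
  ∀ S T : Finset N, v S + v T ≤ v (S ∪ T) + v (S ∩ T)

open Set

noncomputable def unifCdf (l h z : ℝ) : ℝ := max 0 (min 1 ((z - l) / (h - l)))

section Uniform

variable {l h : ℝ}

lemma unifCdf_nonneg (z : ℝ) : 0 ≤ unifCdf l h z := le_max_left _ _

lemma unifCdf_le_one (z : ℝ) : unifCdf l h z ≤ 1 := max_le zero_le_one (min_le_left _ _)

lemma unifCdf_of_le (hl : l < h) {z : ℝ} (hz : z ≤ l) : unifCdf l h z = 0 :=
  max_eq_left <| (min_le_right _ _).trans <|
    div_nonpos_of_nonpos_of_nonneg (by linarith) (by linarith)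

lemma unifCdf_of_ge (hl : l < h) {z : ℝ} (hz : h ≤ z) : unifCdf l h z = 1 := by
  rw [unifCdf, min_eq_left ((one_le_div (by linarith)).2 (by linarith)), max_eq_right zero_le_one]

lemma unifCdf_of_mem_Icc (hl : l < h) {z : ℝ} (hz : z ∈ Icc l h) :
    unifCdf l h z = (z - l) / (h - l) := by
  rw [unifCdf, min_eq_right ((div_le_one (by linarith)).2 (by linarith [hz.2])),
    max_eq_right (div_nonneg (by linarith [hz.1]) (by linarith))]

lemma continuous_unifCdf (l h : ℝ) : Continuous (unifCdf l h) := by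
  unfold unifCdf; fun_prop

lemma integrableOn_unifCdf_Iic (hl : l < h) (H : ℝ) : IntegrableOn (unifCdf l h) (Iic H) := by
  have hzero : IntegrableOn (unifCdf l h) (Iic l) :=
    integrableOn_zero.congr_fun (fun z hz => (unifCdf_of_le hl hz).symm) measurableSet_Iic
  rcases le_total H l with hH | hH
  · exact hzero.mono_set (Iic_subset_Iic.2 hH)
  · rw [← Iic_union_Ioc_eq_Iic hH]
    exact hzero.union (continuous_unifCdf l h).integrableOn_Ioc

lemma integral_unifCdf_Iic (hl : l < h) {H : ℝ} (hH : h ≤ H) :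
    ∫ z in Iic H, unifCdf l h z = H - (l + h) / 2 := by
  have hint := integrableOn_unifCdf_Iic hl
  have hzero : ∫ z in Iic l, unifCdf l h z = 0 := by
    rw [setIntegral_congr_fun measurableSet_Iic (fun z hz => unifCdf_of_le hl hz)]
    simp
  have hramp : ∫ z in l..h, unifCdf l h z = (h - l) / 2 := by
    rw [intervalIntegral.integral_congr (g := fun z => (z - l) / (h - l))
      (fun z hz => unifCdf_of_mem_Icc hl (uIcc_of_le hl.le ▸ hz))]
    rw [intervalIntegral.integral_div, intervalIntegral.integral_comp_sub_right (fun x => x),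
      sub_self, integral_id]
    field_simp [(sub_pos.2 hl).ne']
    ring
  have hone : ∫ z in h..H, unifCdf l h z = H - h := by
    rw [intervalIntegral.integral_congr (g := fun _ => (1 : ℝ))
      (fun z hz => unifCdf_of_ge hl (uIcc_of_le hH ▸ hz).1)]
    simp
  have hcont := (continuous_unifCdf l h).intervalIntegrable (μ := volume)
  have hsplit := intervalIntegral.integral_Iic_sub_Iic (hint l) (hint H)
  rw [hzero, ← intervalIntegral.integral_add_adjacent_intervals (hcont l h) (hcont h H),
    hramp, hone] at hsplit
  linarith

lemma unifCdf_single_crossing {l₁ h₁ l₂ h₂ : ℝ} (h₁lt : l₁ < h₁) (h₂lt : l₂ < h₂) (hl : l₂ ≤ l₁)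
    {z z' : ℝ} (hzz' : z ≤ z') (hlt : unifCdf l₂ h₂ z < unifCdf l₁ h₁ z) :
    unifCdf l₂ h₂ z' ≤ unifCdf l₁ h₁ z' := by
  rcases le_or_gt h₁ z' with hz' | hz'
  · exact unifCdf_of_ge h₁lt hz' ▸ unifCdf_le_one z'
  have hz : l₁ < z := by
    by_contra! hz
    rw [unifCdf_of_le h₁lt hz] at hlt
    exact (unifCdf_nonneg z).not_gt hlt
  have hz₂ : z < h₂ := by
    by_contra! hz₂
    rw [unifCdf_of_ge h₂lt hz₂] at hlt
    exact (unifCdf_le_one z).not_gt hlt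
  rw [unifCdf_of_mem_Icc h₁lt ⟨hz.le, by linarith⟩,
    unifCdf_of_mem_Icc h₂lt ⟨by linarith, hz₂.le⟩,
    div_lt_div_iff₀ (by linarith) (by linarith)] at hlt
  rw [unifCdf_of_mem_Icc h₁lt ⟨by linarith, hz'.le⟩]
  have hw₁ : 0 < h₁ - l₁ := by linarith
  have hw₂ : 0 < h₂ - l₂ := by linarith
  -- at `z > l₁ ≥ l₂` the ramp starting later is already higher, so it is the steeper one
  have hslope : h₁ - l₁ < h₂ - l₂ := by nlinarith
  refine (max_le_max le_rfl (min_le_right _ _)).trans (max_le (div_nonneg (by linarith) hw₁.le) ?_)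
  rw [div_le_div_iff₀ hw₂ hw₁]
  nlinarith

lemma unif_apply (l h : ℝ) (s : Set ℝ) :
    unif l h s = (ENNReal.ofReal (h - l))⁻¹ * volume (s ∩ Icc l h) := by
  rw [unif, Measure.smul_apply, smul_eq_mul, Measure.restrict_apply' measurableSet_Icc]

lemma isProbabilityMeasure_unif (hl : l < h) : IsProbabilityMeasure (unif l h) :=
  ⟨by rw [unif_apply, univ_inter, Real.volume_Icc,
    ENNReal.inv_mul_cancel (by simpa using hl) ENNReal.ofReal_ne_top]⟩

lemma cdf_unif (hl : l < h) : cdf (unif l h) = unifCdf l h := by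
  have := isProbabilityMeasure_unif hl
  have hw : 0 < h - l := sub_pos.2 hl
  ext z
  have hIic : Iic z ∩ Icc l h = Icc l (min z h) := by
    ext t
    simp only [mem_inter_iff, mem_Iic, mem_Icc, le_min_iff]
    tauto
  rw [cdf_eq_real, measureReal_def, unif_apply, hIic, Real.volume_Icc, ENNReal.toReal_mul,
    ENNReal.toReal_inv, ENNReal.toReal_ofReal hw.le, ENNReal.toReal_ofReal', unifCdf,
    ← div_self hw.ne', min_div_div_right hw.le, min_sub_sub_right, min_comm, max_comm,
    inv_mul_eq_div, ← max_div_div_right hw.le, zero_div]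

lemma cdf_dirac (c : ℝ) : ⇑(cdf (Measure.dirac c)) = (Ici c).indicator 1 := by
  ext z
  rw [cdf_eq_real, measureReal_def, Measure.dirac_apply' _ measurableSet_Iic]
  by_cases hcz : c ≤ z <;> simp [hcz]

lemma ssd_of_single_crossing {P Q : Measure ℝ} {H : ℝ}
    (hint : IntegrableOn (fun z => cdf P z - cdf Q z) (Iic H))
    (hcross : ∀ z z', z ≤ z' → cdf Q z < cdf P z → cdf Q z' ≤ cdf P z')
    (heq : ∀ z, H ≤ z → cdf P z = cdf Q z)
    (hH : ∫ z in Iic H, (cdf P z - cdf Q z) ≤ 0) : SSD P Q := by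
  intro u
  rcases le_total H u with hHu | huH
  · rwa [setIntegral_eq_of_subset_of_forall_sdiff_eq_zero measurableSet_Iic
      (Iic_subset_Iic.2 hHu) fun z hz => sub_eq_zero_of_eq (heq z (not_le.1 hz.2).le)]
  by_cases hneg : ∀ z ≤ u, cdf P z ≤ cdf Q z
  · exact setIntegral_nonpos measurableSet_Iic fun z hz => sub_nonpos.2 (hneg z hz)
  push Not at hneg
  obtain ⟨z₀, hz₀u, hz₀⟩ := hneg
  have htail : 0 ≤ ∫ z in u..H, (cdf P z - cdf Q z) :=
    intervalIntegral.integral_nonneg huH fun z hz =>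
      sub_nonneg.2 (hcross z₀ z (hz₀u.trans hz.1) hz₀)
  have hsplit := intervalIntegral.integral_Iic_sub_Iic (hint.mono_set (Iic_subset_Iic.2 huH)) hint
  linarith

lemma ssd_unif_unif {l₁ h₁ l₂ h₂ : ℝ} (h₁lt : l₁ < h₁) (h₂lt : l₂ < h₂) (hl : l₂ ≤ l₁)
    (hmean : l₂ + h₂ ≤ l₁ + h₁) : SSD (unif l₁ h₁) (unif l₂ h₂) := by
  have hint₁ := integrableOn_unifCdf_Iic h₁lt (max h₁ h₂)
  have hint₂ := integrableOn_unifCdf_Iic h₂lt (max h₁ h₂)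
  refine ssd_of_single_crossing (H := max h₁ h₂) ?_ ?_ ?_ ?_ <;>
    simp only [cdf_unif h₁lt, cdf_unif h₂lt]
  · exact hint₁.sub hint₂
  · exact fun z z' => unifCdf_single_crossing h₁lt h₂lt hl
  · exact fun z hz => by
      rw [unifCdf_of_ge h₁lt (le_of_max_le_left hz), unifCdf_of_ge h₂lt (le_of_max_le_right hz)]
  · rw [integral_sub hint₁ hint₂, integral_unifCdf_Iic h₁lt (le_max_left _ _),
      integral_unifCdf_Iic h₂lt (le_max_right _ _)]
    linarith

lemma ssd_dirac_unif {c : ℝ} (hl : l < h) (hmean : l + h ≤ 2 * c) :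
    SSD (Measure.dirac c) (unif l h) := by
  have hstep : IntegrableOn ((Ici c).indicator (1 : ℝ → ℝ)) (Iic (max c h)) := by
    rw [IntegrableOn, integrable_indicator_iff measurableSet_Ici, IntegrableOn,
      Measure.restrict_restrict measurableSet_Ici, Ici_inter_Iic]
    exact integrableOn_const (by simp)
  have hint := integrableOn_unifCdf_Iic hl (max c h)
  refine ssd_of_single_crossing (H := max c h) ?_ ?_ ?_ ?_ <;>
    simp only [cdf_dirac, cdf_unif hl]
  · exact hstep.sub hint
  · intro z z' hzz' hlt
    have hcz : z ∈ Ici c := by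
      by_contra hcz
      rw [indicator_of_notMem hcz] at hlt
      exact (unifCdf_nonneg z).not_gt hlt
    rw [indicator_of_mem (mem_Ici.2 (le_trans hcz hzz'))]
    exact unifCdf_le_one z'
  · intro z hz
    rw [indicator_of_mem (mem_Ici.2 (le_of_max_le_left hz)),
      unifCdf_of_ge hl (le_of_max_le_right hz), Pi.one_apply]
  · rw [integral_sub hstep hint, setIntegral_indicator measurableSet_Ici, Iic_inter_Ici,
      integral_unifCdf_Iic hl (le_max_right _ _)]
    simp only [Pi.one_apply, setIntegral_const, Real.volume_real_Icc_of_le (le_max_left c h),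
      smul_eq_mul, mul_one]
    linarith

lemma map_unif_affine (hl : l < h) {β : ℝ} (hβ : 0 < β) (c : ℝ) :
    (unif l h).map (fun z => c + β * (z - (l + h) / 2)) =
      unif (c - β * ((h - l) / 2)) (c + β * ((h - l) / 2)) := by
  have hw : 0 < h - l := sub_pos.2 hl
  have hl' : c - β * ((h - l) / 2) < c + β * ((h - l) / 2) := by
    linarith [mul_pos hβ (half_pos hw)]
  have hmeas : Measurable fun z : ℝ => c + β * (z - (l + h) / 2) := by fun_prop
  have := isProbabilityMeasure_unif hl
  have := isProbabilityMeasure_unif hl'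
  have := Measure.isProbabilityMeasure_map (μ := unif l h) hmeas.aemeasurable
  refine Measure.eq_of_cdf _ _ (StieltjesFunction.ext fun z => ?_)
  have hpre : (fun t : ℝ => c + β * (t - (l + h) / 2)) ⁻¹' Iic z
      = Iic ((z - c) / β + (l + h) / 2) := by
    ext t
    simp only [mem_preimage, mem_Iic]
    rw [← sub_le_iff_le_add, le_div_iff₀ hβ]
    constructor <;> intro ht <;> nlinarith
  rw [cdf_eq_real, map_measureReal_apply hmeas measurableSet_Iic, hpre, ← cdf_eq_real,
    cdf_unif hl, cdf_unif hl', unifCdf, unifCdf]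
  congr 2
  field_simp
  ring

lemma ssd_map_unif_affine {l' h' β c : ℝ} (hl : l < h) (hl' : l' < h') (hβ : 0 ≤ β)
    (hlow : l' ≤ c - β * ((h - l) / 2)) (hmean : l' + h' ≤ 2 * c) :
    SSD ((unif l h).map (fun z => c + β * (z - (l + h) / 2))) (unif l' h') := by
  rcases hβ.eq_or_lt with rfl | hβ
  · have := isProbabilityMeasure_unif hl
    simpa only [zero_mul, add_zero, Measure.map_const, measure_univ, one_smul]
      using ssd_dirac_unif hl' hmean
  · rw [map_unif_affine hl hβ]
    exact ssd_unif_unif (by linarith [mul_pos hβ (half_pos (sub_pos.2 hl))]) hl' hlow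
      (by linarith)

end Uniform

section TUGame

variable {N : Type*} [Fintype N] [DecidableEq N] {v : Finset N → ℝ}

lemma exists_le_tight_mem {x : N → ℝ} (hx : ∀ S, v S ≤ ∑ j ∈ S, x j) (i : N) :
    ∃ y ≤ x, (∀ S, v S ≤ ∑ j ∈ S, y j) ∧ ∃ S, i ∈ S ∧ ∑ j ∈ S, y j = v S := by
  obtain ⟨S₀, hS₀, hmin⟩ := (Finset.univ.filter (i ∈ ·)).exists_min_image
    (fun S => ∑ j ∈ S, x j - v S) ⟨{i}, by simp⟩
  simp only [Finset.mem_filter, Finset.mem_univ, true_and] at hS₀ hmin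
  set δ := ∑ j ∈ S₀, x j - v S₀
  have hδ : 0 ≤ δ := sub_nonneg.2 (hx S₀)
  have hsum : ∀ S, ∑ j ∈ S, (x - Pi.single i δ : N → ℝ) j = ∑ j ∈ S, x j - if i ∈ S then δ else 0 :=
    fun S => by simp only [Pi.sub_apply, Finset.sum_sub_distrib, Finset.sum_pi_single']
  refine ⟨x - Pi.single i δ, sub_le_self _ (Pi.single_nonneg.2 hδ), fun S => ?_, S₀, hS₀, ?_⟩
  · rw [hsum]
    split_ifs with hiS
    · linarith [hmin S hiS]
    · linarith [hx S]
  · rw [hsum, if_pos hS₀]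
    ring

lemma IsConvexGame.sum_union_eq (hv : IsConvexGame v) {y : N → ℝ}
    (hy : ∀ S, v S ≤ ∑ j ∈ S, y j) {S T : Finset N}
    (hS : ∑ j ∈ S, y j = v S) (hT : ∑ j ∈ T, y j = v T) :
    ∑ j ∈ S ∪ T, y j = v (S ∪ T) := by
  have := Finset.sum_union_inter (s₁ := S) (s₂ := T) (f := y)
  linarith [hy (S ∪ T), hy (S ∩ T), hv S T]

lemma IsConvexGame.exists_le_tight_superset (hv : IsConvexGame v) (hv₀ : v ∅ = 0) {x : N → ℝ}
    (hx : ∀ S, v S ≤ ∑ j ∈ S, x j) (T : Finset N) :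
    ∃ y ≤ x, (∀ S, v S ≤ ∑ j ∈ S, y j) ∧ ∃ U, T ⊆ U ∧ ∑ j ∈ U, y j = v U := by
  induction T using Finset.induction_on with
  | empty => exact ⟨x, le_rfl, hx, ∅, subset_rfl, by simp [hv₀]⟩
  | insert k T _ ih =>
    obtain ⟨y, hyx, hy, U, hTU, hU⟩ := ih
    obtain ⟨z, hzy, hz, S, hkS, hS⟩ := exists_le_tight_mem hy k
    have hU' : ∑ j ∈ U, z j = v U :=
      le_antisymm ((Finset.sum_le_sum fun j _ => hzy j).trans_eq hU) (hz U)
    exact ⟨z, hzy.trans hyx, hz, S ∪ U,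
      Finset.insert_subset (Finset.mem_union_left _ hkS) (hTU.trans Finset.subset_union_right),
      hv.sum_union_eq hz hS hU'⟩

theorem IsConvexGame.exists_mem_core_le (hv : IsConvexGame v) (hv₀ : v ∅ = 0) {x : N → ℝ}
    (hx : ∀ S, v S ≤ ∑ j ∈ S, x j) : ∃ y ∈ core v, y ≤ x := by
  obtain ⟨y, hyx, hy, U, hU, hUv⟩ := hv.exists_le_tight_superset hv₀ hx Finset.univ
  rw [Finset.univ_subset_iff.1 hU] at hUv
  exact ⟨y, ⟨hy, hUv⟩, hyx⟩

end TUGame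

theorem ssd_core_uniform_sufficient {N : Type*} [Fintype N] [DecidableEq N] [Nonempty N]
    (a b : Finset N → ℝ)
    (hab : ∀ S : Finset N, S.Nonempty → a S < b S)
    (hconv : IsConvexGame (fun S => if S = ∅ then 0 else a S))
    (hcore : (core (fun S => if S = ∅ then 0 else (a S + b S) / 2)).Nonempty) :
    ∃ d r : N → ℝ, (∀ i, 0 ≤ r i) ∧
      (∑ i : N, d i = (a Finset.univ + b Finset.univ) / 2) ∧
      (∑ i : N, r i = 1) ∧
      ∀ S : Finset N, S.Nonempty →
        SSD ((unif (a Finset.univ) (b Finset.univ)).map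
            (fun z =>
              (∑ i ∈ S, d i) +
                (∑ i ∈ S, r i) * (z - (a Finset.univ + b Finset.univ) / 2)))
          (unif (a S) (b S)) := by
  obtain ⟨x, hx, hxN⟩ := hcore
  have hxS : ∀ S : Finset N, S.Nonempty → (a S + b S) / 2 ≤ ∑ i ∈ S, x i := fun S hS => by
    simpa [hS.ne_empty] using hx S
  have hxa : ∀ S, (if S = ∅ then 0 else a S) ≤ ∑ i ∈ S, x i := fun S => by
    rcases S.eq_empty_or_nonempty with rfl | hS
    · simp
    · rw [if_neg hS.ne_empty]
      linarith [hxS S hS, hab S hS]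
  obtain ⟨y, ⟨hy, hyN⟩, hyx⟩ := hconv.exists_mem_core_le (by simp) hxa
  simp only [Finset.univ_nonempty.ne_empty, if_false] at hxN hyN
  have hw : 0 < (b Finset.univ - a Finset.univ) / 2 := by
    linarith [hab _ Finset.univ_nonempty]
  -- `y` is the lower end of the pushed-forward interval, and `x` its midpoint
  have hr : ∀ S : Finset N, (∑ i ∈ S, (x i - y i) / ((b Finset.univ - a Finset.univ) / 2)) *
      ((b Finset.univ - a Finset.univ) / 2) = ∑ i ∈ S, x i - ∑ i ∈ S, y i := fun S => by
    rw [← Finset.sum_div, div_mul_cancel₀ _ hw.ne', Finset.sum_sub_distrib]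
  refine ⟨x, fun i => (x i - y i) / ((b Finset.univ - a Finset.univ) / 2),
    fun i => div_nonneg (sub_nonneg.2 (hyx i)) hw.le, hxN, ?_, fun S hS => ?_⟩
  · rw [← mul_left_inj' hw.ne', hr, hxN, hyN]
    ring
  · refine ssd_map_unif_affine (hab _ Finset.univ_nonempty) (hab S hS)
      (Finset.sum_nonneg fun i _ => div_nonneg (sub_nonneg.2 (hyx i)) hw.le) ?_ ?_
    · rw [hr, sub_sub_cancel]
      simpa [hS.ne_empty] using hy S
    · linarith [hxS S hS]
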